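/- Suppose K is the cubic form on R^3_1 with ONB coefficients a_1 = 2a_4, a_4 ≠ 0 and all other coefficients zero (so K(t,t) = -2a_4 t, K(t,v) = a_4 v, K(t,w) = a_4 w, K(v,v) = -a_4 t, K(w,w) = -a_4 t, K(v,w) = 0). Then the only vectors X ∈ R^3_1 with K(X,X) = -2a_4 X and ⟨X,X⟩ = -1 are X = t; consequently every M ∈ SO(1,2) preserving K satisfies M(t) = t. -/

import Mathlib

open Matrix

/-- ONB inner product of `ℝ³₁` (first coordinate timelike). -/
def ip (x y : Fin 3 → ℝ) : ℝ := -(x 0 * y 0) + x 1 * y 1 + x 2 * y 2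

/-- The standard orthonormal basis `{t,v,w}`. -/
def bas : Fin 3 → Fin 3 → ℝ := ![![1, 0, 0], ![0, 1, 0], ![0, 0, 1]]

/-- Let `K` be the cubic form with ONB coefficients `a₁ = 2a₄`, `a₄ ≠ 0` and
all others zero. Then the only vector `X` with `K(X,X) = -2a₄ X` and
`⟨X,X⟩ = -1` is `X = t`; consequently every `M ∈ SO(1,2)` preserving `K`
satisfies `M t = t`. -/
theorem stmt11 (a₄ : ℝ) (ha : a₄ ≠ 0)
    (K : (Fin 3 → ℝ) →ₗ[ℝ] (Fin 3 → ℝ) →ₗ[ℝ] (Fin 3 → ℝ))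
    (hsymm : ∀ X Y, K X Y = K Y X)
    (h1 : K (bas 0) (bas 0) = (-2 * a₄) • bas 0)
    (h2 : K (bas 0) (bas 1) = a₄ • bas 1)
    (h3 : K (bas 0) (bas 2) = a₄ • bas 2)
    (h4 : K (bas 1) (bas 1) = (-a₄) • bas 0)
    (h5 : K (bas 1) (bas 2) = 0)
    (h6 : K (bas 2) (bas 2) = (-a₄) • bas 0) :
    (∀ X : Fin 3 → ℝ, K X X = (-2 * a₄) • X → ip X X = -1 → X = bas 0) ∧
    (∀ M : Matrix (Fin 3) (Fin 3) ℝ,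
      (∀ x y : Fin 3 → ℝ, ip (M.mulVec x) (M.mulVec y) = ip x y) → M.det = 1 →
      (∀ X Y : Fin 3 → ℝ, K (M.mulVec X) (M.mulVec Y) = M.mulVec (K X Y)) →
      M.mulVec (bas 0) = bas 0) := by
  have main : ∀ X : Fin 3 → ℝ, K X X = (-2 * a₄) • X → ip X X = -1 → X = bas 0 := by
    intro X hK hip
    set x := X 0 with hx
    set y := X 1 with hy
    set z := X 2 with hz
    have hX : X = x • bas 0 + y • bas 1 + z • bas 2 := by
      funext i; fin_cases i <;> simp [bas, hx, hy, hz]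
    rw [hX] at hK
    simp only [map_add, LinearMap.map_smul₂, _root_.map_smul, LinearMap.add_apply, LinearMap.smul_apply,
      h1, h2, h3, h4, h5, h6, hsymm (bas 1) (bas 0), hsymm (bas 2) (bas 0),
      hsymm (bas 2) (bas 1), h2, h3, h5] at hK
    have e0 := congrFun hK 0
    have e1 := congrFun hK 1
    have e2 := congrFun hK 2
    simp [bas, hX] at e0 e1 e2
    have hip' : -(x*x) + y*y + z*z = -1 := hip
    have h0 : a₄ * (2*x*x + y*y + z*z - 2*x) = 0 := by linear_combination -e0
    have hq := (mul_eq_zero.mp h0).resolve_left ha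
    have hfac : (x - 1) * (3*x + 1) = 0 := by linarith [hq, hip']
    have hx1 : x = 1 := by
      rcases mul_eq_zero.mp hfac with h | h
      · linarith
      · exfalso; nlinarith [mul_self_nonneg y, mul_self_nonneg z]
    have hyz : y*y + z*z = 0 := by rw [hx1] at hip'; linarith
    have hy0 : y = 0 := by
      have : y * y = 0 := by nlinarith [mul_self_nonneg z]
      exact mul_self_eq_zero.mp this
    have hz0 : z = 0 := by
      have : z * z = 0 := by nlinarith [mul_self_nonneg y]
      exact mul_self_eq_zero.mp this
    rw [hX, hx1, hy0, hz0]; funext i; fin_cases i <;> simp [bas]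
  refine ⟨main, fun M hip _ hKM => ?_⟩
  have h := main (M.mulVec (bas 0)) ?_ ?_
  · exact h
  · rw [hKM, h1, mulVec_smul]
  · rw [hip]; simp [ip, bas]
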